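/- arXiv:2002.10498 — 4 statements merged into one kernel-verified Lean document; each statement's English description precedes it below -/
import Mathlib

section
/- In a strongly connected graph, every walk that is a subwalk of all closed arc-covering walks is an omnitig; equivalently, if a walk W is not an omnitig (it has a forbidden path), then there exists a closed arc-covering walk of which W is not a subwalk, provided the graph is not a closed path. -/
/-- A directed multigraph: arcs `E` with tail and head maps into nodes `V`. -/
structure MultiDigraph (V E : Type) where
  tail : E → V
  head : E → V

namespace MultiDigraph

variable {V E : Type} (G : MultiDigraph V E)

/-- A walk is a (possibly empty) list of arcs that chain head-to-tail. -/
def IsWalk (W : List E) : Prop := W.Chain' (fun a b => G.head a = G.tail b)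

/-- The node sequence `v₀, v₁, …, v_ℓ` of a nonempty walk (empty for the empty walk). -/
def nodes : List E → List V
  | [] => []
  | e :: W => G.tail e :: (e :: W).map G.head

/-- The start node of a nonempty walk. -/
def src (W : List E) : Option V := W.head?.map G.tail

/-- The end node of a nonempty walk. -/
def dst (W : List E) : Option V := W.getLast?.map G.head

/-- A path: a walk whose nodes are all distinct, except that the last node may
equal the first one (closed path). -/
def IsPath (W : List E) : Prop :=
  G.IsWalk W ∧ (G.nodes W).dropLast.Nodup ∧ (G.nodes W).tail.Nodup

/-- `P` is a forbidden path for the pair of arcs `(eR, eL)`: a non-empty path from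
`tail eR` to `head eL` whose first arc differs from `eR` and last arc differs from `eL`. -/
def ForbiddenPath (eR eL : E) (P : List E) : Prop :=
  G.IsPath P ∧ P ≠ [] ∧ G.src P = some (G.tail eR) ∧ G.dst P = some (G.head eL) ∧
    P.head? ≠ some eR ∧ P.getLast? ≠ some eL

/-- A walk `e₀ … e_ℓ` is an omnitig if for all `1 ≤ i ≤ j ≤ ℓ` there is no
forbidden path from `tail e_j` to `head e_{i-1}`. -/
def IsOmnitig (W : List E) : Prop :=
  G.IsWalk W ∧ ∀ i j : ℕ, (hi : 1 ≤ i) → (hij : i ≤ j) → (hj : j < W.length) →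
    ¬ ∃ P, G.ForbiddenPath (W[j]'hj) (W[i-1]'(by omega)) P

/-- `u` reaches `v` by a (possibly empty) walk. -/
def Reaches (u v : V) : Prop :=
  u = v ∨ ∃ W, G.IsWalk W ∧ G.src W = some u ∧ G.dst W = some v

def StronglyConnected : Prop := ∀ u v : V, G.Reaches u v

/-- In-degree of a node. -/
noncomputable def inDeg (v : V) : ℕ := Nat.card {e : E // G.head e = v}

/-- Out-degree of a node. -/
noncomputable def outDeg (v : V) : ℕ := Nat.card {e : E // G.tail e = v}

def JoinArc (e : E) : Prop := 1 < G.inDeg (G.head e)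

def SplitArc (e : E) : Prop := 1 < G.outDeg (G.tail e)

def Bivalent (v : V) : Prop := 1 < G.inDeg v ∧ 1 < G.outDeg v

def JoinFree (W : List E) : Prop := ∀ e ∈ W, ¬ G.JoinArc e

def SplitFree (W : List E) : Prop := ∀ e ∈ W, ¬ G.SplitArc e

/-- A closed walk covering every arc at least once. -/
def IsClosedArcCovering (W : List E) : Prop :=
  G.IsWalk W ∧ W ≠ [] ∧ G.src W = G.dst W ∧ ∀ e : E, e ∈ W

/-- `W'` occurs as a cyclic (wrap-around) subwalk of the closed walk `W`. -/
def IsCyclicSubwalk (W' W : List E) : Prop :=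
  ∃ i : ℕ, ∀ k : ℕ, k < W'.length → W'[k]? = W[(i + k) % W.length]?

/-- The graph consists of a single closed path through all nodes and arcs. -/
def IsClosedPathGraph : Prop :=
  ∃ C : List E, G.IsPath C ∧ C ≠ [] ∧ G.src C = G.dst C ∧ C.Nodup ∧
    (∀ e : E, e ∈ C) ∧ (∀ v : V, v ∈ G.nodes C)

/-- Compressed graph: no biunivocal nodes and no biunivocal arcs. -/
def Compressed : Prop :=
  (∀ v : V, 1 < G.inDeg v ∨ 1 < G.outDeg v) ∧
  (∀ e : E, G.JoinArc e ∨ G.SplitArc e)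

/-- `u` reaches `v` by a (possibly empty) path avoiding the arc `f`. -/
def ReachesAvoid (f : E) (u v : V) : Prop :=
  u = v ∨ ∃ P, G.IsPath P ∧ f ∉ P ∧ G.src P = some u ∧ G.dst P = some v

/-- A maximal omnitig: an omnitig extendable neither to the left nor to the right. -/
def IsMaximalOmnitig (W : List E) : Prop :=
  G.IsOmnitig W ∧ (∀ e : E, ¬ G.IsOmnitig (e :: W)) ∧ (∀ e : E, ¬ G.IsOmnitig (W ++ [e]))

/-- The reverse graph. -/
def rev : MultiDigraph V E := ⟨G.head, G.tail⟩

/-- Nodes reachable from `v` by a join-free path. -/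
def Rplus (v : V) : Set V :=
  {u | u = v ∨ ∃ W, G.IsPath W ∧ G.JoinFree W ∧ G.src W = some v ∧ G.dst W = some u}

/-- Nodes reaching `v` by a split-free path. -/
def Rminus (v : V) : Set V :=
  {u | u = v ∨ ∃ W, G.IsPath W ∧ G.SplitFree W ∧ G.src W = some u ∧ G.dst W = some v}

/-- The node set of the macronode centered at `v`. -/
def macronodeSet (v : V) : Set V := G.Rplus v ∪ G.Rminus v

/-- The graph obtained from `G` by contracting the arc `e`. -/
def contract [DecidableEq V] (e : E) : MultiDigraph V {a : E // a ≠ e} where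
  tail a := if G.tail a.1 = G.head e then G.tail e else G.tail a.1
  head a := if G.head a.1 = G.head e then G.tail e else G.head a.1

end MultiDigraph

/-!
Let `W = A ++ e_{i-1} :: M ++ e_j :: B` with a forbidden path `P` from `tail e_j` to
`head e_{i-1}`. Choosing the first occurrence of `e_j` after `e_{i-1}` keeps `P` forbidden, so
`e_j ∉ M`; and `e_j ∉ P` because `P` is a path leaving `tail e_j` by another arc. Then `P ++ M`
is a closed walk at `tail e_j` avoiding `e_j`, and inserting it before every occurrence of `e_j`
in a closed arc-covering walk yields a closed arc-covering walk `C` in which every `e_j` is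
preceded by `P ++ M`. An occurrence of `W` in `C` would put `e_{i-1}` where the last arc of `P`
stands, which differs from `e_{i-1}`.
-/

namespace List

variable {α : Type*}

theorem exists_eq_append_cons_append_cons {l : List α} {i j : ℕ} (hij : i < j)
    (hj : j < l.length) : ∃ A M B, l = A ++ l[i] :: M ++ l[j] :: B := by
  refine ⟨l.take i, (l.drop (i + 1)).take (j - i - 1), l.drop (j + 1), ?_⟩
  have hdrop : (l.drop (i + 1)).drop (j - i - 1) = l[j] :: l.drop (j + 1) := by
    rw [drop_drop, show i + 1 + (j - i - 1) = j by omega, drop_eq_getElem_cons hj]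
  calc l = l.take i ++ l[i] :: (l.drop (i + 1)) := by
        rw [← drop_eq_getElem_cons, take_append_drop]
    _ = _ := by rw [← hdrop]; simp

theorem exists_append_cons_eq_append_cons_not_mem (y : α) (B : List α) :
    ∀ M : List α, ∃ M' B', M ++ y :: B = M' ++ y :: B' ∧ y ∉ M'
  | [] => ⟨[], B, rfl, not_mem_nil⟩
  | a :: M => by
    by_cases ha : a = y
    · exact ⟨[], M ++ y :: B, by simp [ha], not_mem_nil⟩
    · obtain ⟨M', B', h, hy⟩ := exists_append_cons_eq_append_cons_not_mem y B M
      exact ⟨a :: M', B', by simp [h], by simp [Ne.symm ha, hy]⟩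

variable [DecidableEq α]

def insertBefore : List α → α → List α → List α
  | [], _, _ => []
  | a :: L, e, Z => if a = e then Z ++ e :: L.insertBefore e Z else a :: L.insertBefore e Z

theorem subset_insertBefore : ∀ (L : List α) (e : α) (Z : List α), L ⊆ L.insertBefore e Z
  | [], _, _ => nil_subset _
  | a :: L, e, Z => by
    by_cases ha : a = e
    · simpa [insertBefore, ha] using
        subset_append_of_subset_right _ (subset_cons_of_subset _ (subset_insertBefore L e Z))
    · simpa [insertBefore, ha] using subset_cons_of_subset _ (subset_insertBefore L e Z)

theorem suffix_take_insertBefore {e : α} {Z : List α} (he : e ∉ Z) :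
    ∀ {L : List α} {p : ℕ}, (L.insertBefore e Z)[p]? = some e →
      Z <:+ (L.insertBefore e Z).take p
  | [], p, hp => by simp [insertBefore] at hp
  | a :: L, p, hp => by
    by_cases ha : a = e
    · simp only [insertBefore, ha, if_true] at hp ⊢
      rcases lt_trichotomy p Z.length with hlt | rfl | hgt
      · rw [getElem?_append_left hlt] at hp
        exact absurd (mem_of_getElem? hp) he
      · simp
      · obtain ⟨p, rfl⟩ := Nat.exists_eq_add_of_lt hgt
        rw [getElem?_append_right (by omega), show Z.length + p + 1 - Z.length = p + 1 by omega,
          getElem?_cons_succ] at hp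
        rw [take_append, take_of_length_le (by omega),
          show Z.length + p + 1 - Z.length = p + 1 by omega, take_succ_cons]
        exact (suffix_take_insertBefore he hp).trans ((suffix_cons _ _).trans (suffix_append _ _))
    · simp only [insertBefore, ha, if_false] at hp ⊢
      rcases p with _ | p
      · exact absurd (by simpa using hp) ha
      · rw [getElem?_cons_succ] at hp
        rw [take_succ_cons]
        exact (suffix_take_insertBefore he hp).trans (suffix_cons _ _)

end List

namespace MultiDigraph

variable {V E : Type} {G : MultiDigraph V E}

variable (G) in
def IsWalkBetween : V → V → List E → Prop
  | u, v, [] => u = v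
  | u, v, e :: L => u = G.tail e ∧ IsWalkBetween (G.head e) v L

namespace IsWalkBetween

theorem append {u v w : V} {L₁ L₂ : List E} (h₁ : G.IsWalkBetween u v L₁)
    (h₂ : G.IsWalkBetween v w L₂) : G.IsWalkBetween u w (L₁ ++ L₂) := by
  induction L₁ generalizing u with
  | nil => exact h₁ ▸ h₂
  | cons e L ih => exact ⟨h₁.1, ih h₁.2⟩

end IsWalkBetween

theorem isWalk_singleton (e : E) : G.IsWalk [e] := List.isChain_singleton e

theorem isWalk_cons_cons {e f : E} {L : List E} :
    G.IsWalk (e :: f :: L) ↔ G.head e = G.tail f ∧ G.IsWalk (f :: L) :=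
  List.isChain_cons_cons

theorem isWalkBetween_iff {u v : V} {L : List E} (hL : L ≠ []) :
    G.IsWalkBetween u v L ↔ G.IsWalk L ∧ G.src L = some u ∧ G.dst L = some v := by
  induction L generalizing u with
  | nil => exact absurd rfl hL
  | cons e L ih =>
    rcases L with _ | ⟨f, L⟩
    · simp [IsWalkBetween, isWalk_singleton, src, dst, eq_comm]
    · simp only [IsWalkBetween, isWalk_cons_cons, src, dst, List.head?_cons, Option.map_some,
        Option.some.injEq, List.getLast?_cons_cons] at ih ⊢
      rw [ih (List.cons_ne_nil _ _)]
      constructor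
      · rintro ⟨rfl, hw, hf, hd⟩
        exact ⟨⟨hf.symm, hw⟩, rfl, hd⟩
      · rintro ⟨⟨hf, hw⟩, rfl, hd⟩
        exact ⟨rfl, hw, hf.symm, hd⟩

theorem isWalkBetween_of_isWalk_cons_append_singleton {x y : E} :
    ∀ {M : List E}, G.IsWalk (x :: M ++ [y]) → G.IsWalkBetween (G.head x) (G.tail y) M
  | [], h => (isWalk_cons_cons.1 h).1
  | _ :: _, h => by
    rw [List.cons_append, List.cons_append, isWalk_cons_cons] at h
    exact ⟨h.1, isWalkBetween_of_isWalk_cons_append_singleton h.2⟩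

theorem StronglyConnected.exists_isWalkBetween (hG : G.StronglyConnected) (u v : V) :
    ∃ L, G.IsWalkBetween u v L := by
  obtain rfl | ⟨L, hL, hs, hd⟩ := hG u v
  · exact ⟨[], rfl⟩
  · have hne : L ≠ [] := by rintro rfl; simp [src] at hs
    exact ⟨L, (isWalkBetween_iff hne).2 ⟨hL, hs, hd⟩⟩

theorem StronglyConnected.exists_isWalkBetween_subset (hG : G.StronglyConnected) (l : List E)
    (u : V) : ∃ v L, G.IsWalkBetween u v L ∧ l ⊆ L := by
  induction l generalizing u with
  | nil => exact ⟨u, [], rfl, List.nil_subset _⟩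
  | cons e l ih =>
    obtain ⟨L₁, h₁⟩ := hG.exists_isWalkBetween u (G.tail e)
    obtain ⟨v, L₂, h₂, hl⟩ := ih (G.head e)
    refine ⟨v, L₁ ++ e :: L₂, h₁.append ⟨rfl, h₂⟩, ?_⟩
    simp only [List.cons_subset, List.mem_append, List.mem_cons, true_or, or_true, true_and]
    exact List.Subset.trans hl (List.subset_append_of_subset_right _ (List.subset_cons_self _ _))

theorem StronglyConnected.exists_isWalkBetween_self_forall_mem [Finite E]
    (hG : G.StronglyConnected) (u : V) : ∃ C, G.IsWalkBetween u u C ∧ ∀ e, e ∈ C := by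
  obtain ⟨l, -, hl⟩ := Finite.exists_univ_list E
  obtain ⟨v, L, hL, hlL⟩ := hG.exists_isWalkBetween_subset l u
  obtain ⟨L', hL'⟩ := hG.exists_isWalkBetween v u
  exact ⟨L ++ L', hL.append hL', fun e => List.mem_append_left _ (hlL (hl e))⟩

theorem dropLast_nodes {P : List E} (hP : G.IsWalk P) : (G.nodes P).dropLast = P.map G.tail := by
  rcases P with _ | ⟨e, P⟩
  · rfl
  · induction P generalizing e with
    | nil => rfl
    | cons f P ih =>
      obtain ⟨hef, hP⟩ := isWalk_cons_cons.1 hP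
      simpa [nodes, hef] using ih f hP

theorem ForbiddenPath.not_mem {eR eL : E} {P : List E} (hP : G.ForbiddenPath eR eL P) :
    eR ∉ P := by
  obtain ⟨⟨hw, hnd, -⟩, hne, hs, -, hhd, -⟩ := hP
  obtain ⟨p, P, rfl⟩ := List.exists_cons_of_ne_nil hne
  rw [dropLast_nodes hw] at hnd
  intro hmem
  have : eR = p :=
    List.inj_on_of_nodup_map hnd hmem List.mem_cons_self (by simpa [src] using hs.symm)
  exact hhd (by simp [this])

theorem ForbiddenPath.isWalkBetween {eR eL : E} {P : List E} (hP : G.ForbiddenPath eR eL P) :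
    G.IsWalkBetween (G.tail eR) (G.head eL) P :=
  (isWalkBetween_iff hP.2.1).2 ⟨hP.1.1, hP.2.2.1, hP.2.2.2.1⟩

theorem exists_forbiddenPath_of_not_isOmnitig {W : List E} (hW : G.IsWalk W)
    (h : ¬G.IsOmnitig W) : ∃ A eL M ej B P,
      W = A ++ eL :: M ++ ej :: B ∧ G.ForbiddenPath ej eL P ∧ ej ∉ M := by
  simp only [IsOmnitig, hW, true_and, not_forall, not_not] at h
  obtain ⟨i, j, hi, hij, hj, P, hP⟩ := h
  obtain ⟨A, M, B, hWe⟩ := List.exists_eq_append_cons_append_cons (show i - 1 < j by omega) hj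
  obtain ⟨M', B', hMB, hM'⟩ := List.exists_append_cons_eq_append_cons_not_mem W[j] B M
  exact ⟨A, _, M', _, B', P, by simpa [hMB] using hWe, hP, hM'⟩

theorem IsWalkBetween.insertBefore [DecidableEq E] {u v : V} {L : List E} {e : E} {Z : List E}
    (hL : G.IsWalkBetween u v L) (hZ : G.IsWalkBetween (G.tail e) (G.tail e) Z) :
    G.IsWalkBetween u v (L.insertBefore e Z) := by
  induction L generalizing u with
  | nil => exact hL
  | cons a L ih =>
    obtain ⟨rfl, hL⟩ := hL
    by_cases ha : a = e
    · subst ha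
      rw [List.insertBefore, if_pos rfl]
      exact hZ.append ⟨rfl, ih hL⟩
    · rw [List.insertBefore, if_neg ha]
      exact ⟨rfl, ih hL⟩

theorem IsWalkBetween.isClosedArcCovering {u : V} {C : List E} (h : G.IsWalkBetween u u C)
    (hne : C ≠ []) (hC : ∀ e, e ∈ C) : G.IsClosedArcCovering C := by
  obtain ⟨hw, hs, hd⟩ := (isWalkBetween_iff hne).1 h
  exact ⟨hw, hne, hs.trans hd.symm, hC⟩

theorem IsCyclicSubwalk.suffix_of_forall_suffix_take {A U B C Z : List E} {y : E}
    (h : IsCyclicSubwalk (A ++ U ++ y :: B) C) (hy : ∀ p, C[p]? = some y → Z <:+ C.take p)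
    (hU : U.length ≤ Z.length) : U <:+ Z := by
  obtain ⟨s, hs⟩ := h
  set q := (s + (A.length + U.length)) % C.length
  have hq : C[q]? = some y := by
    rw [← hs _ (by simp)]
    simp
  have hqC : q < C.length := (List.getElem?_eq_some_iff.1 hq).1
  have hZ := hy q hq
  -- `y` occurs in `C` at `q ≥ |U|`, so the positions of `U` in `C` do not wrap around.
  have hUq : U.length ≤ q := hU.trans (hZ.length_le.trans (List.length_take_le _ _))
  refine List.suffix_of_suffix_length_le ?_ hZ hU
  rw [List.suffix_iff_eq_drop, List.length_take_of_le hqC.le]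
  refine List.ext_getElem? fun m => ?_
  rw [List.getElem?_drop, List.getElem?_take]
  rcases lt_or_ge m U.length with hm | hm
  · rw [if_pos (by omega)]
    have hWm := hs (A.length + m) (by simp; omega)
    rw [List.append_assoc, List.getElem?_append_right (by omega), Nat.add_sub_cancel_left,
      List.getElem?_append_left hm] at hWm
    rw [hWm, show s + (A.length + m) = s + (A.length + U.length) - (U.length - m) by omega,
      ← Nat.mod_sub_of_le (by omega), show q - (U.length - m) = q - U.length + m by omega]
  · rw [List.getElem?_eq_none hm, if_neg (by omega)]

end MultiDigraph

theorem stmt_4_general {V E : Type} [Fintype E]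
    (G : MultiDigraph V E) (hG : G.StronglyConnected)
    (W : List E) (hW : G.IsWalk W) (hno : ¬ G.IsOmnitig W) :
    ∃ C : List E, G.IsClosedArcCovering C ∧ ¬ MultiDigraph.IsCyclicSubwalk W C := by
  classical
  obtain ⟨A, eL, M, ej, B, P, rfl, hP, hejM⟩ :=
    MultiDigraph.exists_forbiddenPath_of_not_isOmnitig hW hno
  have hM : G.IsWalkBetween (G.head eL) (G.tail ej) M :=
    MultiDigraph.isWalkBetween_of_isWalk_cons_append_singleton
      (List.IsChain.infix hW ⟨A, B, by simp⟩)
  have hZ : G.IsWalkBetween (G.tail ej) (G.tail ej) (P ++ M) := hP.isWalkBetween.append hM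
  have hejZ : ej ∉ P ++ M := by simp [hP.not_mem, hejM]
  obtain ⟨C₀, hC₀, hcov₀⟩ := hG.exists_isWalkBetween_self_forall_mem (G.tail ej)
  have hcov : ∀ e, e ∈ C₀.insertBefore ej (P ++ M) :=
    fun e => C₀.subset_insertBefore ej _ (hcov₀ e)
  refine ⟨_, (hC₀.insertBefore hZ).isClosedArcCovering (List.ne_nil_of_mem (hcov ej)) hcov,
    fun hsub => ?_⟩
  obtain ⟨-, hPne, -, -, -, hlast⟩ := hP
  have hsuff : [eL] ++ M <:+ P ++ M :=
    hsub.suffix_of_forall_suffix_take (fun _ => List.suffix_take_insertBefore hejZ)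
      (by simpa using List.length_pos_iff.2 hPne)
  exact hlast (List.singleton_suffix_iff_getLast?_eq_some.1
    ((List.suffix_append_inj_of_length_eq rfl).1 hsuff).1)

/-- In a strongly connected graph that is not a closed path, every
walk that is not an omnitig fails to be a (cyclic) subwalk of some closed
arc-covering walk. -/
theorem stmt_4 {V E : Type} [Fintype V] [Fintype E]
    (G : MultiDigraph V E) (hG : G.StronglyConnected)
    (hnp : ¬ G.IsClosedPathGraph)
    (W : List E) (hW : G.IsWalk W) (hno : ¬ G.IsOmnitig W) :
    ∃ C : List E, G.IsClosedArcCovering C ∧ ¬ MultiDigraph.IsCyclicSubwalk W C :=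
  stmt_4_general G hG W hW hno
end

section
/- (Y-intersection Property) Let fWg be an omnitig in a strongly connected graph, where f is a join arc, W is a join-free path (possibly empty), and g is a split arc. Then for any sibling split arc g' of g (i.e., g' ≠ g with tail(g') = tail(g)), the walk fWg' is not an omnitig. -/
/-!
Since `f` is a join arc, some other arc `e` enters `head f`, and by strong connectivity `e` closes
a cycle through `head f`: a path from `head f` back to `head f` whose last arc is not `f`. Walking
along `W g`, the omnitig property of `f W g` says that such a path starting at the tail of the
current arc must begin with that arc; as the arcs of `W` are not join arcs the path does not end
there, so dropping its first arc moves the path one step forward. At `tail g` we obtain a path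
back into `head f` that starts with `g` and does not end with `f`; since `tail g' = tail g` and
`g' ≠ g`, it is a forbidden path for `f W g'`.
-/

namespace MultiDigraph

variable {V E : Type} (G : MultiDigraph V E)

def IsReentry (f : E) (u : V) (D : List E) : Prop :=
  G.IsPath D ∧ G.src D = some u ∧ G.dst D = some (G.head f) ∧ D.getLast? ≠ some f

variable {G}

section Walks

theorem src_cons (a : E) (L : List E) : G.src (a :: L) = some (G.tail a) := rfl

theorem dst_cons (a : E) {L : List E} (hL : L ≠ []) : G.dst (a :: L) = G.dst L := by
  obtain ⟨b, L, rfl⟩ := List.exists_cons_of_ne_nil hL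
  simp [dst, List.getLast?_cons_cons]

theorem dst_singleton (a : E) : G.dst [a] = some (G.head a) := rfl

theorem IsWalk.src_eq_head {a : E} {L : List E} (h : G.IsWalk (a :: L)) (hL : L ≠ []) :
    G.src L = some (G.head a) := by
  obtain ⟨b, L, rfl⟩ := List.exists_cons_of_ne_nil hL
  simp [src, (List.isChain_cons.mp h).1 b rfl]

theorem IsWalk.cons {a : E} {L : List E} (h : G.IsWalk L) (hsrc : G.src L = some (G.head a)) :
    G.IsWalk (a :: L) := by
  refine List.isChain_cons.mpr ⟨fun b hb => ?_, h⟩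
  simp [src, Option.mem_def.mp hb] at hsrc
  exact hsrc.symm

theorem nodes_cons_of_isWalk {a : E} {L : List E} (h : G.IsWalk (a :: L)) (hL : L ≠ []) :
    G.nodes (a :: L) = G.tail a :: G.nodes L := by
  obtain ⟨b, L, rfl⟩ := List.exists_cons_of_ne_nil hL
  simp [nodes, (List.isChain_cons.mp h).1 b rfl]

theorem nodes_concat {L : List E} (a : E) (hL : L ≠ []) :
    G.nodes (L ++ [a]) = G.nodes L ++ [G.head a] := by
  obtain ⟨b, L, rfl⟩ := List.exists_cons_of_ne_nil hL
  simp [nodes]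

theorem IsPath.tail {a : E} {L : List E} (h : G.IsPath (a :: L)) (hL : L ≠ []) : G.IsPath L := by
  obtain ⟨hW, -, htail⟩ := h
  have hnodes : G.nodes L = (G.nodes (a :: L)).tail := by rw [nodes_cons_of_isWalk hW hL]; rfl
  exact ⟨hW.tail, hnodes ▸ (List.dropLast_sublist _).nodup htail,
    hnodes ▸ (List.tail_sublist _).nodup htail⟩

theorem exists_nodup_suffix {Q : List E} {u v : V} (hW : G.IsWalk Q) (hnd : (G.nodes Q).Nodup)
    (hu : u ∈ G.nodes Q) (hv : G.dst Q = some v) (huv : u ≠ v) :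
    ∃ S, G.IsWalk S ∧ G.src S = some u ∧ G.dst S = some v ∧ (G.nodes S).Nodup := by
  induction Q with
  | nil => simp [nodes] at hu
  | cons c Q ih =>
    by_cases huc : u = G.tail c
    · exact ⟨c :: Q, hW, by rw [src_cons, huc], hv, hnd⟩
    rcases eq_or_ne Q [] with rfl | hQ
    · simp [nodes, huc] at hu
      subst hu
      exact absurd (Option.some_injective _ hv) huv
    rw [nodes_cons_of_isWalk hW hQ] at hu hnd
    exact ih hW.tail hnd.of_cons ((List.mem_cons.mp hu).resolve_left huc)
      (by rwa [dst_cons c hQ] at hv)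

theorem exists_nodup_walk {P : List E} {u v : V} (hW : G.IsWalk P) (hu : G.src P = some u)
    (hv : G.dst P = some v) (huv : u ≠ v) :
    ∃ Q, G.IsWalk Q ∧ G.src Q = some u ∧ G.dst Q = some v ∧ (G.nodes Q).Nodup := by
  induction P generalizing u with
  | nil => simp [src] at hu
  | cons a P ih =>
    obtain rfl : G.tail a = u := Option.some_injective _ hu
    by_cases hav : G.head a = v
    · refine ⟨[a], List.isChain_singleton a, rfl, by rw [dst_singleton, hav], ?_⟩
      simpa [nodes, hav] using huv
    have hP : P ≠ [] := by rintro rfl; exact hav (Option.some_injective _ hv)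
    obtain ⟨Q, hQW, hQu, hQv, hQnd⟩ :=
      ih hW.tail (hW.src_eq_head hP) (by rwa [dst_cons a hP] at hv) hav
    by_cases hmem : G.tail a ∈ G.nodes Q
    · exact exists_nodup_suffix hQW hQnd hmem hQv huv
    have hQ : Q ≠ [] := by rintro rfl; simp [src] at hQu
    have hW' : G.IsWalk (a :: Q) := hQW.cons hQu
    refine ⟨a :: Q, hW', rfl, by rwa [dst_cons a hQ], ?_⟩
    rw [nodes_cons_of_isWalk hW' hQ]
    exact List.nodup_cons.mpr ⟨hmem, hQnd⟩

theorem isPath_concat_of_nodup {R : List E} {e : E} (hW : G.IsWalk R) (hnd : (G.nodes R).Nodup)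
    (hsrc : G.src R = some (G.head e)) (hdst : G.dst R = some (G.tail e)) :
    G.IsPath (R ++ [e]) := by
  have hR : R ≠ [] := by rintro rfl; simp [src] at hsrc
  obtain ⟨r, R', rfl⟩ := List.exists_cons_of_ne_nil hR
  have hr : G.tail r = G.head e := Option.some_injective _ hsrc
  have hnodes : G.nodes (r :: R') = G.head e :: (r :: R').map G.head := by rw [nodes, hr]
  refine ⟨?_, ?_, ?_⟩
  · refine List.isChain_append.mpr ⟨hW, List.isChain_singleton e, fun x hx y hy => ?_⟩
    simp only [List.head?_cons, Option.mem_def, Option.some.injEq] at hy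
    simp only [dst, Option.map_eq_some_iff] at hdst
    obtain ⟨x', hx', hx'e⟩ := hdst
    rw [hx', Option.mem_def, Option.some.injEq] at hx
    rw [← hy, ← hx, hx'e]
  · rw [nodes_concat e (List.cons_ne_nil r R'), List.dropLast_concat]
    exact hnd
  · rw [nodes_concat e (List.cons_ne_nil r R'), hnodes, List.cons_append, List.tail_cons]
    rw [hnodes] at hnd
    exact (List.perm_append_singleton _ _).nodup_iff.mpr hnd

theorem StronglyConnected.exists_cycle (hG : G.StronglyConnected) (e : E) :
    ∃ C, G.IsPath C ∧ G.src C = some (G.head e) ∧ C.getLast? = some e := by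
  by_cases hloop : G.head e = G.tail e
  · exact ⟨[e], ⟨List.isChain_singleton e, by simp [nodes], by simp [nodes]⟩,
      by rw [src_cons, hloop], rfl⟩
  obtain ⟨P, hPW, hPu, hPv⟩ := (hG (G.head e) (G.tail e)).resolve_left hloop
  obtain ⟨R, hRW, hRu, hRv, hRnd⟩ := exists_nodup_walk hPW hPu hPv hloop
  have hR : R ≠ [] := by rintro rfl; simp [src] at hRu
  exact ⟨R ++ [e], isPath_concat_of_nodup hRW hRnd hRu hRv,
    by obtain ⟨r, R', rfl⟩ := List.exists_cons_of_ne_nil hR; exact hRu, List.getLast?_concat⟩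

end Walks

section Reentry

variable {f : E}

theorem exists_reentry_of_joinArc (hG : G.StronglyConnected) (hf : G.JoinArc f) :
    ∃ C, G.IsReentry f (G.head f) C := by
  have hcard : 1 < Nat.card {e : E // G.head e = G.head f} := hf
  have : Finite {e : E // G.head e = G.head f} := Nat.finite_of_card_ne_zero (by omega)
  have : Nontrivial {e : E // G.head e = G.head f} := Finite.one_lt_card_iff_nontrivial.mp hcard
  obtain ⟨⟨e, he⟩, hef⟩ := exists_ne (⟨f, rfl⟩ : {e : E // G.head e = G.head f})
  obtain ⟨C, hCp, hCsrc, hClast⟩ := hG.exists_cycle e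
  refine ⟨C, hCp, he ▸ hCsrc, ?_, ?_⟩
  · simp [dst, hClast, he]
  · rw [hClast]
    exact fun h => hef (Subtype.ext (Option.some_injective _ h))

theorem IsReentry.forbiddenPath {a : E} {D : List E} (hD : G.IsReentry f (G.tail a) D)
    (hDa : D.head? ≠ some a) : G.ForbiddenPath a f D := by
  obtain ⟨hp, hsrc, hdst, hlast⟩ := hD
  exact ⟨hp, by rintro rfl; simp [src] at hsrc, hsrc, hdst, hDa, hlast⟩

theorem IsReentry.head?_eq {a : E} {D : List E} (hD : G.IsReentry f (G.tail a) D)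
    (hfree : ¬ G.ForbiddenPath a f D) : D.head? = some a := by
  by_contra hDa
  exact hfree (hD.forbiddenPath hDa)

/-- `D` is not `[a]` alone, since `a` is not a join arc while `head f` is a join node. -/
theorem IsReentry.tail (hf : G.JoinArc f) {a : E} {D : List E} (hD : G.IsReentry f (G.tail a) D)
    (hDa : D.head? = some a) (ha : ¬ G.JoinArc a) : G.IsReentry f (G.head a) D.tail := by
  obtain ⟨hp, -, hdst, hlast⟩ := hD
  have hDne : D ≠ [] := by rintro rfl; simp at hDa
  obtain ⟨d, D, rfl⟩ := List.exists_cons_of_ne_nil hDne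
  obtain rfl : d = a := Option.some_injective _ hDa
  have hD : D ≠ [] := by
    rintro rfl
    rw [dst_singleton, Option.some.injEq] at hdst
    exact ha (by rwa [JoinArc, hdst])
  obtain ⟨d', D', rfl⟩ := List.exists_cons_of_ne_nil hD
  exact ⟨hp.tail hD, hp.1.src_eq_head hD, by rwa [dst_cons d (List.cons_ne_nil d' D')] at hdst,
    by rwa [List.getLast?_cons_cons] at hlast⟩

theorem IsOmnitig.not_forbiddenPath {L : List E} (ho : G.IsOmnitig (f :: L)) {a : E} (ha : a ∈ L)
    (D : List E) : ¬ G.ForbiddenPath a f D := by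
  obtain ⟨j, hj, rfl⟩ := List.mem_iff_getElem.mp ha
  exact fun hD => ho.2 1 (j + 1) le_rfl (by omega) (by simp [hj]) ⟨D, hD⟩

theorem exists_reentry_of_joinFree (hf : G.JoinArc f) {g : E} :
    ∀ {W : List E} {u : V} {D : List E}, G.JoinFree W →
      (∀ a ∈ W, ∀ P, ¬ G.ForbiddenPath a f P) → G.IsWalk (W ++ [g]) →
      G.src (W ++ [g]) = some u → G.IsReentry f u D → ∃ D', G.IsReentry f (G.tail g) D'
  | [], u, D, _, _, _, hsrc, hD => by
    obtain rfl : G.tail g = u := Option.some_injective _ hsrc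
    exact ⟨D, hD⟩
  | a :: W, u, D, hWj, hfree, hW, hsrc, hD => by
    obtain rfl : G.tail a = u := Option.some_injective _ hsrc
    have ha : a ∈ a :: W := List.mem_cons_self
    exact exists_reentry_of_joinFree hf (fun b hb => hWj b (List.mem_cons_of_mem a hb))
      (fun b hb => hfree b (List.mem_cons_of_mem a hb)) hW.tail (hW.src_eq_head (by simp))
      (hD.tail hf (hD.head?_eq (hfree a ha D)) (hWj a ha))

end Reentry

end MultiDigraph

open MultiDigraph

theorem stmt_8_general {V E : Type}
    (G : MultiDigraph V E) (hG : G.StronglyConnected)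
    (f : E) (W : List E) (g : E) (hf : G.JoinArc f)
    (hWj : G.JoinFree W)
    (ho : G.IsOmnitig (f :: (W ++ [g])))
    (g' : E) (hne : g' ≠ g) (ht : G.tail g' = G.tail g) :
    ¬ G.IsOmnitig (f :: (W ++ [g'])) := by
  intro ho'
  obtain ⟨C, hC⟩ := exists_reentry_of_joinArc hG hf
  obtain ⟨D, hD⟩ := exists_reentry_of_joinFree hf hWj
    (fun a ha => ho.not_forbiddenPath (List.mem_append_left _ ha)) ho.1.tail
    (ho.1.src_eq_head (by simp)) hC
  have hDg : D.head? = some g := hD.head?_eq (ho.not_forbiddenPath (by simp) D)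
  refine ho'.not_forbiddenPath (by simp) D ((ht ▸ hD).forbiddenPath ?_)
  rw [hDg]
  exact fun h => hne (Option.some_injective _ h).symm

/-- Y-intersection Property: if `fWg` is an omnitig with `f` a join
arc, `W` a join-free path (possibly empty), `g` a split arc, then for any sibling
split arc `g' ≠ g` of `g`, the walk `fWg'` is not an omnitig. -/
theorem stmt_8 {V E : Type} [Fintype V] [Fintype E]
    (G : MultiDigraph V E) (hG : G.StronglyConnected)
    (f : E) (W : List E) (g : E) (hf : G.JoinArc f) (hg : G.SplitArc g)
    (hWp : G.IsPath W) (hWj : G.JoinFree W)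
    (ho : G.IsOmnitig (f :: (W ++ [g])))
    (g' : E) (hne : g' ≠ g) (ht : G.tail g' = G.tail g) :
    ¬ G.IsOmnitig (f :: (W ++ [g'])) :=
  stmt_8_general G hG f W g hf hWj ho g' hne ht
end

section
/- (X-intersection Property, part i) Let v be a bivalent node of a strongly connected graph, let f_1 ≠ f_2 be join arcs with head(f_1) = head(f_2) = v, and g_1 ≠ g_2 split arcs with tail(g_1) = tail(g_2) = v. If both f_1 g_1 and f_2 g_2 are omnitigs, then the in-degree and out-degree of v both equal 2. -/
/-! If `v` had a third in-arc `f`, strong connectivity would close `f` into a closed path through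
`v`, ending with `f`. Its first arc differs from `g₁` or from `g₂`, say from `gᵢ`; as its last arc
`f` differs from `fᵢ`, it is a forbidden path for the omnitig `fᵢ gᵢ`. Symmetrically, a third
out-arc `g` starts a closed path through `v` whose last arc differs from `f₁` or `f₂`. -/

namespace MultiDigraph

variable {V E : Type} {G : MultiDigraph V E}

variable (G) in
/-- Unlike `IsPath`, all nodes are distinct, endpoints included. -/
def IsOpenPath (u w : V) (P : List E) : Prop :=
  G.IsWalk P ∧ G.src P = some u ∧ G.dst P = some w ∧ (G.nodes P).Nodup

variable (G) in
def IsClosedPath (v : V) (P : List E) : Prop :=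
  G.IsPath P ∧ G.src P = some v ∧ G.dst P = some v

section Walks

variable {P : List E} {e : E} {u w : V}

lemma ne_nil_of_src_eq_some (h : G.src P = some u) : P ≠ [] := by
  rintro rfl
  simp [src] at h

lemma head?_nodes (P : List E) : (G.nodes P).head? = G.src P := by
  cases P <;> rfl

lemma getLast?_nodes (P : List E) : (G.nodes P).getLast? = G.dst P := by
  cases P with
  | nil => rfl
  | cons e P =>
    rw [nodes, List.map_cons, List.getLast?_cons_cons, ← List.map_cons, List.getLast?_map]
    rfl

lemma nodes_append (hP : P ≠ []) (Q : List E) :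
    G.nodes (P ++ Q) = G.nodes P ++ Q.map G.head := by
  obtain ⟨a, P, rfl⟩ := List.exists_cons_of_ne_nil hP
  simp [nodes]

lemma nodes_cons_of_src_eq (h : G.src P = some (G.head e)) :
    G.nodes (e :: P) = G.tail e :: G.nodes P := by
  obtain ⟨a, P, rfl⟩ := List.exists_cons_of_ne_nil (ne_nil_of_src_eq_some h)
  simp_all [nodes, src]

lemma src_append (hP : P ≠ []) (Q : List E) : G.src (P ++ Q) = G.src P := by
  simp [src, List.head?_append_of_ne_nil _ hP]

lemma dst_append_singleton (P : List E) (e : E) : G.dst (P ++ [e]) = some (G.head e) := by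
  simp [dst]

lemma dst_cons_s9 (hP : P ≠ []) (e : E) : G.dst (e :: P) = G.dst P := by
  simp [dst, List.getLast?_cons, List.getLast?_eq_some_getLast hP]

lemma IsWalk.append_singleton (hP : G.IsWalk P) (h : G.dst P = some (G.tail e)) :
    G.IsWalk (P ++ [e]) := by
  refine List.isChain_append.2 ⟨hP, List.isChain_singleton e, ?_⟩
  intro a ha b hb
  simp_all [dst]

lemma IsWalk.cons_s9 (hP : G.IsWalk P) (h : G.src P = some (G.head e)) : G.IsWalk (e :: P) := by
  refine List.isChain_cons.2 ⟨?_, hP⟩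
  intro b hb
  simp_all [src]

lemma isPath_singleton (e : E) : G.IsPath [e] :=
  ⟨List.isChain_singleton e, by simp [nodes], by simp [nodes]⟩

end Walks

section OpenPaths

variable {P : List E} {e : E} {u w x : V}

lemma isOpenPath_singleton (h : G.tail e ≠ G.head e) :
    G.IsOpenPath (G.tail e) (G.head e) [e] :=
  ⟨List.isChain_singleton e, rfl, rfl, by simp [nodes, h]⟩

lemma IsOpenPath.append_singleton (hP : G.IsOpenPath u w P) (he : G.tail e = w)
    (hx : G.head e ∉ G.nodes P) : G.IsOpenPath u (G.head e) (P ++ [e]) := by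
  obtain ⟨hwalk, hs, hd, hnd⟩ := hP
  have hne := ne_nil_of_src_eq_some hs
  refine ⟨hwalk.append_singleton (he ▸ hd), by rw [src_append hne, hs],
    dst_append_singleton P e, ?_⟩
  rw [nodes_append hne, List.map_singleton]
  exact (List.perm_append_singleton _ _).nodup_iff.2 (List.nodup_cons.2 ⟨hx, hnd⟩)

lemma IsOpenPath.exists_of_mem_nodes (hP : G.IsOpenPath u w P) (hx : x ∈ G.nodes P)
    (hxu : x ≠ u) : ∃ P', G.IsOpenPath u x P' := by
  obtain ⟨hwalk, hs, -, hnd⟩ := hP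
  obtain ⟨a, P₀, rfl⟩ := List.exists_cons_of_ne_nil (ne_nil_of_src_eq_some hs)
  have hx' : x ∈ (a :: P₀).map G.head := by
    simp only [nodes, List.mem_cons] at hx
    exact hx.resolve_left (by simp_all [src])
  obtain ⟨b, hb, rfl⟩ := List.mem_map.1 hx'
  obtain ⟨P₁, P₂, hsplit⟩ := List.append_of_mem hb
  have hsplit' : a :: P₀ = (P₁ ++ [b]) ++ P₂ := by simp [hsplit]
  rw [hsplit'] at hwalk hs hnd
  refine ⟨P₁ ++ [b], hwalk.left_of_append, ?_, dst_append_singleton P₁ b, ?_⟩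
  · rwa [src_append (by simp)] at hs
  · rw [nodes_append (by simp)] at hnd
    exact hnd.of_append_left

lemma exists_isOpenPath_of_isWalk {W : List E} (hW : G.IsWalk W) (hs : G.src W = some u)
    (hd : G.dst W = some w) (huw : u ≠ w) : ∃ P, G.IsOpenPath u w P := by
  induction W using List.reverseRecOn generalizing w with
  | nil => simp [src] at hs
  | append_singleton W e ih =>
    rw [dst_append_singleton, Option.some_inj] at hd
    subst hd
    by_cases hnil : W = []
    · subst hnil
      simp only [List.nil_append, src, List.head?_cons, Option.map_some, Option.some_inj] at hs
      exact ⟨[e], hs ▸ isOpenPath_singleton (hs ▸ huw)⟩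
    rw [src_append hnil] at hs
    by_cases hu : u = G.tail e
    · exact ⟨[e], hu ▸ isOpenPath_singleton (hu ▸ huw)⟩
    have hdW : G.dst W = some (G.tail e) := by
      have := (List.isChain_append.1 hW).2.2
      simp_all [dst, List.getLast?_eq_some_getLast hnil]
    obtain ⟨P, hP⟩ := ih (List.isChain_append.1 hW).1 hs hdW hu
    by_cases hmem : G.head e ∈ G.nodes P
    · exact hP.exists_of_mem_nodes hmem (Ne.symm huw)
    · exact ⟨P ++ [e], hP.append_singleton rfl hmem⟩

lemma StronglyConnected.exists_isOpenPath (hG : G.StronglyConnected) (huw : u ≠ w) :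
    ∃ P, G.IsOpenPath u w P := by
  obtain h | ⟨W, hW, hs, hd⟩ := hG u w
  · exact absurd h huw
  · exact exists_isOpenPath_of_isWalk hW hs hd huw

end OpenPaths

section ClosedPaths

variable {P : List E} {e : E} {u w : V}

lemma IsOpenPath.isClosedPath_append (hP : G.IsOpenPath u w P) (he : G.tail e = w)
    (hu : G.head e = u) : G.IsClosedPath u (P ++ [e]) := by
  obtain ⟨hwalk, hs, hd, hnd⟩ := hP
  have hne := ne_nil_of_src_eq_some hs
  obtain ⟨t, ht⟩ := List.head?_eq_some_iff.1 ((head?_nodes P).trans hs)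
  refine ⟨⟨hwalk.append_singleton (he ▸ hd), ?_, ?_⟩, by rw [src_append hne, hs],
    hu ▸ dst_append_singleton P e⟩
  · simpa [nodes_append hne] using hnd
  · rw [ht] at hnd
    simpa [nodes_append hne, ht, hu] using (List.perm_append_singleton u t).nodup_iff.2 hnd

lemma IsOpenPath.isClosedPath_cons (hP : G.IsOpenPath u w P) (he : G.head e = u)
    (hw : G.tail e = w) : G.IsClosedPath w (e :: P) := by
  obtain ⟨hwalk, hs, hd, hnd⟩ := hP
  have hne := ne_nil_of_src_eq_some hs
  obtain ⟨d, hd'⟩ := List.getLast?_eq_some_iff.1 ((getLast?_nodes P).trans hd)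
  have hnodes := nodes_cons_of_src_eq (e := e) (he ▸ hs)
  refine ⟨⟨hwalk.cons_s9 (he ▸ hs), ?_, ?_⟩, by simp [src, hw], by rw [dst_cons_s9 hne, hd]⟩
  · rw [hnodes, hd', hw, ← List.cons_append, List.dropLast_concat]
    rw [hd'] at hnd
    exact (List.perm_append_singleton w d).nodup_iff.1 hnd
  · simpa [hnodes] using hnd

lemma isClosedPath_singleton (h : G.tail e = G.head e) : G.IsClosedPath (G.head e) [e] :=
  ⟨isPath_singleton e, by simp [src, h], by simp [dst]⟩

lemma StronglyConnected.exists_isClosedPath_getLast? (hG : G.StronglyConnected) (f : E) :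
    ∃ P, G.IsClosedPath (G.head f) P ∧ P.getLast? = some f := by
  by_cases h : G.tail f = G.head f
  · exact ⟨[f], isClosedPath_singleton h, rfl⟩
  · obtain ⟨Q, hQ⟩ := hG.exists_isOpenPath (Ne.symm h)
    exact ⟨Q ++ [f], hQ.isClosedPath_append rfl rfl, List.getLast?_concat⟩

lemma StronglyConnected.exists_isClosedPath_head? (hG : G.StronglyConnected) (g : E) :
    ∃ P, G.IsClosedPath (G.tail g) P ∧ P.head? = some g := by
  by_cases h : G.tail g = G.head g
  · exact ⟨[g], h ▸ isClosedPath_singleton h, rfl⟩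
  · obtain ⟨Q, hQ⟩ := hG.exists_isOpenPath (Ne.symm h)
    exact ⟨g :: Q, hQ.isClosedPath_cons rfl rfl, rfl⟩

end ClosedPaths

section XIntersection

variable {v : V} {f₁ f₂ g₁ g₂ : E}

lemma IsOmnitig.head?_eq_or_getLast?_eq {f g : E} {P : List E} (h : G.IsOmnitig [f, g])
    (hf : G.head f = v) (hg : G.tail g = v) (hP : G.IsClosedPath v P) :
    P.head? = some g ∨ P.getLast? = some f := by
  by_contra! hne
  obtain ⟨hpath, hs, hd⟩ := hP
  exact h.2 1 1 le_rfl le_rfl (by simp)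
    ⟨P, hpath, ne_nil_of_src_eq_some hs, hg ▸ hs, hf ▸ hd, hne.1, hne.2⟩

variable (hG : G.StronglyConnected)
  (hf₁ : G.head f₁ = v) (hf₂ : G.head f₂ = v) (hg₁ : G.tail g₁ = v) (hg₂ : G.tail g₂ = v)
  (h₁ : G.IsOmnitig [f₁, g₁]) (h₂ : G.IsOmnitig [f₂, g₂])
include hG hf₁ hf₂ hg₁ hg₂ h₁ h₂

lemma eq_or_eq_of_head_eq (hgg : g₁ ≠ g₂) {f : E} (hf : G.head f = v) : f = f₁ ∨ f = f₂ := by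
  by_contra! hne
  obtain ⟨P, hP, hlast⟩ := hG.exists_isClosedPath_getLast? f
  rw [hf] at hP
  have hP₁ := (h₁.head?_eq_or_getLast?_eq hf₁ hg₁ hP).resolve_right (by simpa [hlast] using hne.1)
  have hP₂ := (h₂.head?_eq_or_getLast?_eq hf₂ hg₂ hP).resolve_right (by simpa [hlast] using hne.2)
  exact hgg (Option.some_inj.1 (hP₁.symm.trans hP₂))

lemma eq_or_eq_of_tail_eq (hff : f₁ ≠ f₂) {g : E} (hg : G.tail g = v) : g = g₁ ∨ g = g₂ := by
  by_contra! hne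
  obtain ⟨P, hP, hfirst⟩ := hG.exists_isClosedPath_head? g
  rw [hg] at hP
  have hP₁ := (h₁.head?_eq_or_getLast?_eq hf₁ hg₁ hP).resolve_left (by simpa [hfirst] using hne.1)
  have hP₂ := (h₂.head?_eq_or_getLast?_eq hf₂ hg₂ hP).resolve_left (by simpa [hfirst] using hne.2)
  exact hff (Option.some_inj.1 (hP₁.symm.trans hP₂))

end XIntersection

end MultiDigraph

lemma Nat.card_subtype_le_two {α : Type*} {p : α → Prop} {a b : α}
    (h : ∀ x, p x → x = a ∨ x = b) : Nat.card {x // p x} ≤ 2 :=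
  (Nat.card_mono (Set.toFinite {a, b}) h).trans <| by
    rw [Nat.card_coe_set_eq]
    exact (Set.ncard_insert_le a {b}).trans (by simp)

open MultiDigraph in
theorem stmt_9_general {V E : Type}
    (G : MultiDigraph V E) (hG : G.StronglyConnected)
    (v : V) (hv : G.Bivalent v)
    (f₁ f₂ g₁ g₂ : E) (hff : f₁ ≠ f₂) (hgg : g₁ ≠ g₂)
    (hf₁ : G.head f₁ = v) (hf₂ : G.head f₂ = v)
    (hg₁ : G.tail g₁ = v) (hg₂ : G.tail g₂ = v)
    (h₁ : G.IsOmnitig [f₁, g₁]) (h₂ : G.IsOmnitig [f₂, g₂]) :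
    G.inDeg v = 2 ∧ G.outDeg v = 2 := by
  have hin : G.inDeg v ≤ 2 := Nat.card_subtype_le_two fun _ hf =>
    eq_or_eq_of_head_eq hG hf₁ hf₂ hg₁ hg₂ h₁ h₂ hgg hf
  have hout : G.outDeg v ≤ 2 := Nat.card_subtype_le_two fun _ hg =>
    eq_or_eq_of_tail_eq hG hf₁ hf₂ hg₁ hg₂ h₁ h₂ hff hg
  exact ⟨le_antisymm hin hv.1, le_antisymm hout hv.2⟩

/-- X-intersection Property, part i. -/
theorem stmt_9 {V E : Type} [Fintype V] [Fintype E]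
    (G : MultiDigraph V E) (hG : G.StronglyConnected)
    (v : V) (hv : G.Bivalent v)
    (f₁ f₂ g₁ g₂ : E) (hff : f₁ ≠ f₂) (hgg : g₁ ≠ g₂)
    (hf₁ : G.head f₁ = v) (hf₂ : G.head f₂ = v)
    (hg₁ : G.tail g₁ = v) (hg₂ : G.tail g₂ = v)
    (hjf₁ : G.JoinArc f₁) (hjf₂ : G.JoinArc f₂)
    (hsg₁ : G.SplitArc g₁) (hsg₂ : G.SplitArc g₂)
    (h₁ : G.IsOmnitig [f₁, g₁]) (h₂ : G.IsOmnitig [f₂, g₂]) :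
    G.inDeg v = 2 ∧ G.outDeg v = 2 :=
  stmt_9_general G hG v hv f₁ f₂ g₁ g₂ hff hgg hf₁ hf₂ hg₁ hg₂ h₁ h₂
end

section
/- No omnitig contains a bivalent node twice as an internal node. -/
/-!
Let the bivalent node `u` be the head of `W[i]` and of `W[j]`, `i < j`, both followed by arcs
of `W`. By strong connectivity some path closes at `u` through an in-arc `g ≠ W[i]`. Since no
forbidden path exists, this cycle must run along `W` from `W[i+1]` on; being a path it returns
to `u` only at its end, which is therefore some `W[k]` with `i < k ≤ j`, so `W[k] = g ≠ W[i]`.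
Now close a path at `u` through an out-arc `f ≠ W[k+1]`: again by the absence of forbidden
paths its last arc is both `W[i]` and `W[k]`, a contradiction.
-/

lemma List.exists_lt_getElem_eq_of_two_le_count {α : Type*} [DecidableEq α] {l : List α} {a : α}
    (h : 2 ≤ l.count a) : ∃ i j, ∃ (_ : i < j) (hj : j < l.length), l[i] = a ∧ l[j] = a := by
  obtain ⟨f, hf⟩ := List.sublist_iff_exists_fin_orderEmbedding_get_eq.mp
    (List.duplicate_iff_sublist.mp (List.duplicate_iff_two_le_count.mpr h))
  exact ⟨f ⟨0, by simp⟩, f ⟨1, by simp⟩, f.strictMono (by simp), (f _).isLt,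
    by simpa using (hf ⟨0, by simp⟩).symm, by simpa using (hf ⟨1, by simp⟩).symm⟩

namespace MultiDigraph

variable {V E : Type} {G : MultiDigraph V E}

lemma IsWalk.head_eq_tail {W : List E} (h : G.IsWalk W) {k : ℕ} (hk : k + 1 < W.length) :
    G.head W[k] = G.tail W[k + 1] :=
  List.isChain_iff_getElem.mp h k hk

lemma IsWalk.take {W : List E} (h : G.IsWalk W) (n : ℕ) : G.IsWalk (W.take n) :=
  List.IsChain.take h n

lemma IsWalk.drop {W : List E} (h : G.IsWalk W) (n : ℕ) : G.IsWalk (W.drop n) :=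
  List.IsChain.drop h n

lemma IsWalk.map_tail_tail {W : List E} (h : G.IsWalk W) :
    W.tail.map G.tail = W.dropLast.map G.head := by
  induction W with
  | nil => rfl
  | cons a W ih =>
    cases W with
    | nil => rfl
    | cons b W =>
      obtain ⟨hab, hW⟩ := List.isChain_cons_cons.mp h
      simpa [hab] using ih hW

lemma IsWalk.take_append_drop_of_head_eq {W : List E} (h : G.IsWalk W) {p q : ℕ} (hpq : p ≤ q)
    (hq : q < W.length) (heq : G.head W[p] = G.head W[q]) :
    G.IsWalk (W.take (p + 1) ++ W.drop (q + 1)) := by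
  refine List.IsChain.append (h.take _) (h.drop _) fun x hx y hy => ?_
  rw [List.getLast?_take, if_neg (by omega), Nat.add_sub_cancel,
    List.getElem?_eq_getElem (by omega), Option.some_or, Option.mem_some_iff] at hx
  rw [List.head?_drop, Option.mem_def, List.getElem?_eq_some_iff] at hy
  obtain ⟨hq', rfl⟩ := hy
  rw [← hx, heq]
  exact h.head_eq_tail hq'

lemma nodes_tail (W : List E) : (G.nodes W).tail = W.map G.head := by
  cases W <;> rfl

lemma IsWalk.nodes_dropLast {W : List E} (h : G.IsWalk W) :
    (G.nodes W).dropLast = W.map G.tail := by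
  cases W with
  | nil => rfl
  | cons e W =>
    have htails := h.map_tail_tail
    rw [List.tail_cons] at htails
    rw [List.map_cons, htails, List.map_dropLast]
    rfl

lemma nodes_drop_one_dropLast (W : List E) :
    ((G.nodes W).drop 1).dropLast = W.dropLast.map G.head := by
  cases W <;> simp [nodes, List.map_dropLast]

lemma isPath_iff {W : List E} :
    G.IsPath W ↔ G.IsWalk W ∧ (W.map G.tail).Nodup ∧ (W.map G.head).Nodup := by
  refine ⟨fun ⟨hw, h₁, h₂⟩ => ?_, fun ⟨hw, h₁, h₂⟩ => ?_⟩
  · exact ⟨hw, hw.nodes_dropLast ▸ h₁, nodes_tail W ▸ h₂⟩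
  · exact ⟨hw, hw.nodes_dropLast ▸ h₁, nodes_tail W ▸ h₂⟩

lemma IsPath.drop {W : List E} (h : G.IsPath W) (n : ℕ) : G.IsPath (W.drop n) := by
  obtain ⟨hw, h₁, h₂⟩ := isPath_iff.mp h
  refine isPath_iff.mpr ⟨hw.drop n, ?_, ?_⟩ <;> rw [List.map_drop]
  exacts [h₁.sublist (List.drop_sublist _ _), h₂.sublist (List.drop_sublist _ _)]

lemma IsPath.head_ne_of_dst_eq {R : List E} (h : G.IsPath R) {v : V} (hdst : G.dst R = some v)
    {m : ℕ} (hm : m + 1 < R.length) : G.head R[m] ≠ v := by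
  intro hv
  have hlast : G.head R[R.length - 1] = v := by
    simpa [dst, List.getLast?_eq_getElem?,
      List.getElem?_eq_getElem (by omega : R.length - 1 < R.length)] using hdst
  have := ((isPath_iff.mp h).2.2.getElem_inj_iff (i := m) (j := R.length - 1)
    (hi := by simp; omega) (hj := by simp; omega)).mp (by simp [hv, hlast])
  omega

-- `G.IsWalk (g :: P ++ [g])` says that `g :: P`, equivalently `P ++ [g]`, is a closed walk.
lemma IsWalk.exists_cons_append_nodup {g : E} {P : List E} (h : G.IsWalk (g :: P ++ [g])) :
    ∃ P', G.IsWalk (g :: P' ++ [g]) ∧ ((g :: P').map G.head).Nodup := by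
  by_cases hnd : ((g :: P).map G.head).Nodup
  · exact ⟨P, h, hnd⟩
  rw [List.Nodup, List.pairwise_iff_getElem] at hnd
  push Not at hnd
  obtain ⟨p, q, hp, hq, hpq, heq⟩ := hnd
  simp only [List.length_map, List.length_cons] at hp hq
  simp only [List.getElem_map] at heq
  have hsplice := h.take_append_drop_of_head_eq hpq.le (by simpa using hq.trans (Nat.lt_succ_self _))
    (by rwa [List.getElem_append_left, List.getElem_append_left])
  have hshorter : (P.take p ++ P.drop q).length < P.length := by simp; omega
  refine IsWalk.exists_cons_append_nodup (P := P.take p ++ P.drop q) ?_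
  convert hsplice using 1
  simp only [List.cons_append, List.take_succ_cons, List.drop_succ_cons,
    List.take_append_of_le_length (by omega : p ≤ P.length),
    List.drop_append_of_le_length (by omega : q ≤ P.length), List.append_assoc]
termination_by P.length
decreasing_by simpa using hshorter

lemma exists_isWalk_cons_append_nodup (hG : G.StronglyConnected) (g : E) :
    ∃ P, G.IsWalk (g :: P ++ [g]) ∧ ((g :: P).map G.head).Nodup := by
  obtain ⟨P, hP⟩ : ∃ P, G.IsWalk (g :: P ++ [g]) := by
    rcases hG (G.head g) (G.tail g) with h | ⟨P, hP, hsrc, hdst⟩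
    · exact ⟨[], List.isChain_cons_cons.mpr ⟨h, List.isChain_singleton g⟩⟩
    · refine ⟨P, List.IsChain.append (List.isChain_cons.mpr ⟨?_, hP⟩)
        (List.isChain_singleton g) ?_⟩
      · intro y hy
        rw [Option.mem_def] at hy
        simpa [src, hy, eq_comm] using hsrc
      · intro x hx y hy
        rw [Option.mem_def] at hx hy
        simp only [List.head?_cons, Option.some.injEq] at hy
        subst hy
        cases P with
        | nil => simp [src] at hsrc
        | cons a P =>
          rw [List.getLast?_cons_cons] at hx
          simpa [dst, hx] using hdst
  exact hP.exists_cons_append_nodup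

-- The tails of a closed walk are a rotation of its heads.
lemma IsWalk.isPath_of_cons_append {g : E} {P : List E} (h : G.IsWalk (g :: P ++ [g]))
    (hnd : ((g :: P).map G.head).Nodup) : G.IsPath (g :: P) ∧ G.IsPath (P ++ [g]) := by
  have htails : (P ++ [g]).map G.tail = (g :: P).map G.head := by
    have := h.map_tail_tail
    rwa [List.dropLast_concat, List.cons_append, List.tail_cons] at this
  have hperm : ((P ++ [g]).map G.tail).Perm ((g :: P).map G.tail) :=
    (List.perm_append_singleton g P).map _
  have hperm' : ((P ++ [g]).map G.head).Perm ((g :: P).map G.head) :=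
    (List.perm_append_singleton g P).map _
  refine ⟨isPath_iff.mpr ⟨List.IsChain.left_of_append h, ?_, hnd⟩,
    isPath_iff.mpr ⟨List.IsChain.tail h, ?_, hperm'.nodup_iff.mpr hnd⟩⟩
  · exact hperm.nodup_iff.mp (htails ▸ hnd)
  · exact htails ▸ hnd

lemma exists_isPath_getLast? (hG : G.StronglyConnected) (g : E) :
    ∃ R, G.IsPath R ∧ G.src R = some (G.head g) ∧ G.dst R = some (G.head g) ∧
      R.getLast? = some g := by
  obtain ⟨P, hP, hnd⟩ := exists_isWalk_cons_append_nodup hG g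
  refine ⟨P ++ [g], (hP.isPath_of_cons_append hnd).2, ?_, by simp [dst], by simp⟩
  obtain ⟨y, hy⟩ : ∃ y, (P ++ [g]).head? = some y := by cases P <;> simp
  have hP' : G.IsWalk (g :: (P ++ [g])) := hP
  have hlink := (List.isChain_cons.mp hP').1 y hy
  simp [src, hy, hlink]

lemma exists_isPath_head? (hG : G.StronglyConnected) (f : E) :
    ∃ Q, G.IsPath Q ∧ G.src Q = some (G.tail f) ∧ G.dst Q = some (G.tail f) ∧
      Q.head? = some f := by
  obtain ⟨P, hP, hnd⟩ := exists_isWalk_cons_append_nodup hG f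
  refine ⟨f :: P, (hP.isPath_of_cons_append hnd).1, by simp [src], ?_, rfl⟩
  obtain ⟨x, hx⟩ : ∃ x, (f :: P).getLast? = some x :=
    ⟨_, List.getLast?_eq_getLast_of_ne_nil (by simp)⟩
  have hlink := (List.isChain_append.mp hP).2.2 x hx f rfl
  simp [dst, hx, hlink]

lemma exists_ne_of_one_lt_card_fiber {f : E → V} {v : V} (h : 1 < Nat.card {e // f e = v})
    (e₀ : E) : ∃ e, f e = v ∧ e ≠ e₀ := by
  by_contra! hall
  have : Subsingleton {e // f e = v} :=
    ⟨fun a b => Subtype.ext ((hall a.1 a.2).trans (hall b.1 b.2).symm)⟩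
  exact h.not_ge (Finite.card_le_one_iff_subsingleton.mpr this)

section Omnitigs

variable {W : List E}

lemma IsOmnitig.getLast?_eq (hW : G.IsOmnitig W) {i k : ℕ} (hik : i ≤ k)
    (hk : k + 1 < W.length) {C : List E} (hC : G.IsPath C)
    (hsrc : G.src C = some (G.tail W[k + 1])) (hdst : G.dst C = some (G.head W[i]))
    (hhead : C.head? ≠ some W[k + 1]) : C.getLast? = some W[i] := by
  by_contra hlast
  have hne : C ≠ [] := by rintro rfl; simp [src] at hsrc
  exact hW.2 (i + 1) (k + 1) (by omega) (by omega) hk ⟨C, hC, hne, hsrc, hdst, hhead, hlast⟩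

lemma IsOmnitig.getElem_eq_of_isPath (hW : G.IsOmnitig W) {i : ℕ} (hi : i < W.length)
    {R : List E} (hR : G.IsPath R) (hsrc : G.src R = some (G.head W[i]))
    (hdst : G.dst R = some (G.head W[i])) (hlast : R.getLast? ≠ some W[i]) :
    ∀ m (hm : m < R.length) (hm' : i + m + 1 < W.length), R[m] = W[i + m + 1] := by
  intro m
  induction m using Nat.strong_induction_on with
  | _ m ih =>
    intro hm hm'
    have htail : G.tail R[m] = G.tail W[i + m + 1] := by
      cases m with
      | zero =>
        rw [← hW.1.head_eq_tail hm']
        simpa [src, List.head?_eq_getElem?, List.getElem?_eq_getElem hm] using hsrc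
      | succ m =>
        rw [← hR.1.head_eq_tail hm, ih m (by omega) (by omega) (by omega),
          hW.1.head_eq_tail (by omega)]
        rfl
    by_contra hne
    refine hlast ?_
    have hdrop : (R.drop m).getLast? = R.getLast? := by
      rw [List.getLast?_drop, if_neg (by omega)]
    rw [← hdrop]
    refine hW.getLast?_eq (k := i + m) (by omega) hm' (hR.drop m) ?_ ?_ ?_
    · simp [src, List.getElem?_eq_getElem hm, htail]
    · simpa [dst, hdrop] using hdst
    · simpa [List.getElem?_eq_getElem hm] using hne

lemma IsOmnitig.getElem_eq_of_one_lt_outDeg (hG : G.StronglyConnected) (hW : G.IsOmnitig W)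
    {i k : ℕ} (hik : i ≤ k) (hk : k + 1 < W.length) (heq : G.head W[i] = G.head W[k])
    (hout : 1 < G.outDeg (G.head W[k])) : W[i] = W[k] := by
  have hu : G.head W[k] = G.tail W[k + 1] := hW.1.head_eq_tail hk
  obtain ⟨f, hf, hfne⟩ := exists_ne_of_one_lt_card_fiber (hu ▸ hout) W[k + 1]
  obtain ⟨Q, hQ, hsrc, hdst, hhead⟩ := exists_isPath_head? hG f
  rw [hf] at hsrc hdst
  have hhead' : Q.head? ≠ some W[k + 1] := by simpa [hhead] using hfne
  have hi := hW.getLast?_eq hik hk hQ hsrc (by rw [hdst, ← hu, heq]) hhead'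
  have hk' := hW.getLast?_eq le_rfl hk hQ hsrc (by rw [hdst, ← hu]) hhead'
  exact Option.some_injective _ (hi.symm.trans hk')

lemma IsOmnitig.exists_ne_of_one_lt_inDeg (hG : G.StronglyConnected) (hW : G.IsOmnitig W)
    {i j : ℕ} (hij : i < j) (hj : j < W.length) (heq : G.head W[i] = G.head W[j])
    (hin : 1 < G.inDeg (G.head W[i])) :
    ∃ k, ∃ (_ : i < k) (_ : k ≤ j), G.head W[k] = G.head W[i] ∧ W[k] ≠ W[i] := by
  obtain ⟨g, hg, hgne⟩ := exists_ne_of_one_lt_card_fiber hin W[i]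
  obtain ⟨R, hR, hsrc, hdst, hlast⟩ := exists_isPath_getLast? hG g
  rw [hg] at hsrc hdst
  have hmatch := hW.getElem_eq_of_isPath (by omega) hR hsrc hdst (by simpa [hlast] using hgne)
  have hRpos : 0 < R.length := by
    rcases R with _ | _
    · simp [src] at hsrc
    · simp
  have hRlen : R.length ≤ j - i := by
    by_contra! hlong
    refine hR.head_ne_of_dst_eq hdst (m := j - i - 1) (by omega) ?_
    rw [hmatch _ (by omega) (by omega), heq]
    congr 2
    omega
  have hgk : W[i + R.length] = g := by
    have hlast' : R[R.length - 1] = g := by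
      simpa [List.getLast?_eq_getElem?,
        List.getElem?_eq_getElem (by omega : R.length - 1 < R.length)] using hlast
    rw [← hlast', hmatch _ (by omega) (by omega)]
    congr 1
    omega
  exact ⟨i + R.length, by omega, by omega, by rw [hgk, hg], by rwa [hgk]⟩

end Omnitigs

end MultiDigraph

theorem stmt_12_general {V E : Type} [DecidableEq V]
    (G : MultiDigraph V E) (hG : G.StronglyConnected)
    (W : List E) (hW : G.IsOmnitig W) (u : V) (hu : G.Bivalent u) :
    (((G.nodes W).drop 1).dropLast).count u ≤ 1 := by
  by_contra! hcount
  rw [MultiDigraph.nodes_drop_one_dropLast] at hcount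
  obtain ⟨i, j, hij, hj, hiu, hju⟩ := List.exists_lt_getElem_eq_of_two_le_count hcount
  simp only [List.getElem_map, List.getElem_dropLast, List.length_map,
    List.length_dropLast] at hj hiu hju
  obtain ⟨k, hik, hkj, hku, hki⟩ :=
    hW.exists_ne_of_one_lt_inDeg hG hij (by omega) (hiu.trans hju.symm) (hiu ▸ hu.1)
  exact hki (hW.getElem_eq_of_one_lt_outDeg hG hik.le (by omega) hku.symm
    (by rw [hku, hiu]; exact hu.2)).symm

/-- No omnitig contains a bivalent node twice as an internal node. -/
theorem stmt_12 {V E : Type} [Fintype V] [Fintype E] [DecidableEq V]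
    (G : MultiDigraph V E) (hG : G.StronglyConnected)
    (W : List E) (hW : G.IsOmnitig W) (u : V) (hu : G.Bivalent u) :
    (((G.nodes W).drop 1).dropLast).count u ≤ 1 :=
  stmt_12_general G hG W hW u hu
end
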